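/- Canonical model H-existence lemma: if H_F φ ∉ hd(w), then for any nonempty coalition E ⊆ F and any operation δ, there exist canonical states w', u, u' with w ∼_F w', (w',E,δ,u) ∈ M, u ∼_F u', and φ ∉ hd(u'). The key step is: at least one of the sets X = {¬K_{𝒜∖E}(K_E δ → K_F φ)} ∪ {ψ : K_F ψ ∈ hd(w)} and Y = {¬H_E δ, ¬K_{𝒜∖E} K_F φ} ∪ {ψ : K_F ψ ∈ hd(w)} is consistent. -/

import Mathlib

/-!
If both `X` and `Y` were inconsistent, `hd w` would contain `K_F K_{𝒜∖E}(K_E δ → K_F φ)` and, by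
strategic introspection, `K_F (K_E H_E δ ∨ K_{𝒜∖E} K_F φ)`; pulling `K_E` out of `K_F` gives
`K_E H_E δ ∨ K_F K_{𝒜∖E} K_F φ`. In the first case the Coalition-Informant-Adversary axiom with
`C = E`, `I = F ∖ E`, `A = 𝒜 ∖ F` yields `H_F φ` from `H_E δ`; in the second the same axiom yields
it from the trivially achievable `H_E ⊤`. Either way `H_F φ ∈ hd w`.

The states are `w' = (F, W) :: w`, `u = (𝒜∖E, U) :: w'` and `u' = (F, U') :: u`, with Lindenbaum
extensions `W` of the consistent set, `U` of an `𝒜∖E`-successor of `W` refuting `K_F φ`, and `U'`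
of an `F`-successor of `U` refuting `φ`. The mechanism condition holds because `K_E δ ∈ U` when
`X` is consistent, and `H_E δ ∉ W` when `Y` is.
-/

/-- Formulas of the logic of clandestine operations: propositional variables,
falsum, negation, implication, distributed knowledge `know C φ` and
clandestine power `how C φ` for coalitions `C ⊆ Ag`. -/
inductive Formula (α : Type) (Ag : Type) : Type
  | var  : α → Formula α Ag
  | bot  : Formula α Ag
  | neg  : Formula α Ag → Formula α Ag
  | imp  : Formula α Ag → Formula α Ag → Formula α Ag
  | know : Set Ag → Formula α Ag → Formula α Ag
  | how  : Set Ag → Formula α Ag → Formula α Ag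

namespace Formula

/-- Defined disjunction. -/
def or {α Ag : Type} (φ ψ : Formula α Ag) : Formula α Ag := imp (neg φ) ψ

/-- Defined verum. -/
def top {α Ag : Type} : Formula α Ag := neg bot

/-- Boolean evaluation treating variables and modal formulas as atoms. -/
def eval {α Ag : Type} (v : Formula α Ag → Bool) : Formula α Ag → Bool
  | var p => v (var p)
  | bot => false
  | neg φ => !(eval v φ)
  | imp φ ψ => !(eval v φ) || eval v ψ
  | know C φ => v (know C φ)
  | how C φ => v (how C φ)

end Formula

/-- A propositional tautology: true under every Boolean valuation of its
atoms (variables and modal subformulas). -/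
def Tautology {α Ag : Type} (φ : Formula α Ag) : Prop :=
  ∀ v, φ.eval v = true

/-- Theorems of the logic of clandestine operations. -/
inductive Prov {α Ag : Type} : Formula α Ag → Prop
  | taut {φ} : Tautology φ → Prov φ
  | truth (C : Set Ag) (φ) : Prov (.imp (.know C φ) φ)
  | negIntro (C : Set Ag) (φ) :
      Prov (.imp (.neg (.know C φ)) (.know C (.neg (.know C φ))))
  | distrib (C : Set Ag) (φ ψ) :
      Prov (.imp (.know C (.imp φ ψ)) (.imp (.know C φ) (.know C ψ)))
  | mono {C' C : Set Ag} (φ) : C' ⊆ C → Prov (.imp (.know C' φ) (.know C φ))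
  | stratIntro (C : Set Ag) (φ) : Prov (.imp (.how C φ) (.know C (.how C φ)))
  | cia {C I A : Set Ag} (φ ψ) : C ∩ (I ∪ A) = ∅ →
      Prov (.imp
        (.know (C ∪ I) (.know (A ∪ I) (.imp (.know C φ) (.know (C ∪ I) ψ))))
        (.imp (.how C φ) (.how (C ∪ I) ψ)))
  | nonterm (C : Set Ag) : Prov (.neg (.how C .bot))
  | emptyCoal (φ : Formula α Ag) : Prov (.neg (.how ∅ φ))
  | mp {φ ψ} : Prov (.imp φ ψ) → Prov φ → Prov ψ
  | necK (C : Set Ag) {φ} : Prov φ → Prov (.know C φ)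
  | necH {C : Set Ag} {φ} : C ≠ ∅ → Prov φ → Prov (.how C φ)

/-- Derivability from a set of hypotheses `X`: from theorems of the system
and members of `X` using Modus Ponens only. -/
inductive ProvFrom {α Ag : Type} (X : Set (Formula α Ag)) : Formula α Ag → Prop
  | hyp {φ} : φ ∈ X → ProvFrom X φ
  | thm {φ} : Prov φ → ProvFrom X φ
  | mp {φ ψ} : ProvFrom X (.imp φ ψ) → ProvFrom X φ → ProvFrom X ψ

/-- A set of formulas is consistent if falsum is not derivable from it. -/
def Consistent {α Ag : Type} (X : Set (Formula α Ag)) : Prop :=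
  ¬ ProvFrom X .bot

/-- Maximal consistent set of formulas. -/
def MCS {α Ag : Type} (X : Set (Formula α Ag)) : Prop :=
  Consistent X ∧ ∀ φ : Formula α Ag, φ ∈ X ∨ .neg φ ∈ X

/-- Canonical states are lists of (coalition, maximal consistent set) steps,
most recent step first, rooted at the fixed maximal consistent set `X₀`.
`hd X₀ w` is the maximal consistent set labelling the node `w`. -/
def hd {α Ag : Type} (X₀ : Set (Formula α Ag)) :
    List (Set Ag × Set (Formula α Ag)) → Set (Formula α Ag)
  | [] => X₀
  | (_, X) :: _ => X

/-- The canonical-state condition: every set along the path is maximal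
consistent and contains everything known (to the edge coalition) at its
parent. -/
def IsCanState {α Ag : Type} (X₀ : Set (Formula α Ag)) :
    List (Set Ag × Set (Formula α Ag)) → Prop
  | [] => True
  | (C, X) :: w => IsCanState X₀ w ∧ MCS X ∧
      {φ : Formula α Ag | Formula.know C φ ∈ hd X₀ w} ⊆ X

/-- Canonical indistinguishability for agent `a`: all edges on the simple
tree path between `w` and `w'` (through a common ancestor `v`) are labelled
with a coalition containing `a`. -/
def CSim {α Ag : Type} (a : Ag)
    (w w' : List (Set Ag × Set (Formula α Ag))) : Prop :=
  ∃ v, v <:+ w ∧ v <:+ w' ∧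
    (∀ p ∈ w.take (w.length - v.length), a ∈ p.1) ∧
    (∀ p ∈ w'.take (w'.length - v.length), a ∈ p.1)

/-- Canonical coalition indistinguishability. -/
def CSimC {α Ag : Type} (C : Set Ag)
    (w w' : List (Set Ag × Set (Formula α Ag))) : Prop :=
  ∀ a ∈ C, CSim a w w'

/-- The canonical mechanism: `(w, C, φ, u) ∈ M` iff `w ∼_{𝒜∖C} u` and
`H_C φ ∈ hd w` implies `K_C φ ∈ hd u`. -/
def CanM {α Ag : Type} (X₀ : Set (Formula α Ag))
    (w : List (Set Ag × Set (Formula α Ag))) (C : Set Ag) (φ : Formula α Ag)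
    (u : List (Set Ag × Set (Formula α Ag))) : Prop :=
  CSimC Cᶜ w u ∧ (Formula.how C φ ∈ hd X₀ w → Formula.know C φ ∈ hd X₀ u)

open Formula

variable {α Ag : Type}

namespace ProvFrom

theorem mono {X Y : Set (Formula α Ag)} (hXY : X ⊆ Y) {φ : Formula α Ag}
    (h : ProvFrom X φ) : ProvFrom Y φ := by
  induction h with
  | hyp hφ => exact .hyp (hXY hφ)
  | thm hφ => exact .thm hφ
  | mp _ _ ih₁ ih₂ => exact .mp ih₁ ih₂

theorem exists_finite_subset {X : Set (Formula α Ag)} {φ : Formula α Ag}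
    (h : ProvFrom X φ) : ∃ s ⊆ X, s.Finite ∧ ProvFrom s φ := by
  induction h with
  | @hyp φ hφ => exact ⟨{φ}, by simpa, Set.finite_singleton φ, .hyp rfl⟩
  | thm hφ => exact ⟨∅, Set.empty_subset X, Set.finite_empty, .thm hφ⟩
  | mp _ _ ih₁ ih₂ =>
    obtain ⟨s₁, hs₁X, hs₁, h₁⟩ := ih₁
    obtain ⟨s₂, hs₂X, hs₂, h₂⟩ := ih₂
    exact ⟨s₁ ∪ s₂, Set.union_subset hs₁X hs₂X, hs₁.union hs₂,
      .mp (h₁.mono Set.subset_union_left) (h₂.mono Set.subset_union_right)⟩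

theorem deduction {X : Set (Formula α Ag)} {φ ψ : Formula α Ag}
    (h : ProvFrom (insert φ X) ψ) : ProvFrom X (.imp φ ψ) := by
  induction h with
  | @hyp χ hχ =>
    rcases hχ with rfl | hχ
    · exact .thm (.taut fun v => by simp [eval])
    · exact .mp (.thm (.taut (φ := .imp χ (.imp φ χ)) fun v => by simp [eval]; grind))
        (.hyp hχ)
  | @thm χ hχ =>
    exact .mp (.thm (.taut (φ := .imp χ (.imp φ χ)) fun v => by simp [eval]; grind)) (.thm hχ)
  | @mp χ ξ _ _ ih₁ ih₂ =>
    have : Tautology (.imp (.imp φ (.imp χ ξ)) (.imp (.imp φ χ) (.imp φ ξ))) := fun v => by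
      simp [eval]; grind
    exact .mp (.mp (.thm (.taut this)) ih₁) ih₂

theorem absurd {X : Set (Formula α Ag)} {φ : Formula α Ag} (h : ProvFrom X φ)
    (hneg : ProvFrom X (.neg φ)) : ProvFrom X .bot :=
  .mp (.mp (.thm (.taut (φ := .imp φ (.imp (.neg φ) .bot)) fun v => by simp [eval])) h) hneg

theorem of_not_consistent_insert_neg {X : Set (Formula α Ag)} {φ : Formula α Ag}
    (h : ¬ Consistent (insert (.neg φ) X)) : ProvFrom X φ :=
  .mp (.thm (.taut fun v => by simp [eval])) (deduction (not_not.1 h))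

end ProvFrom

namespace Consistent

theorem isOfFiniteCharacter :
    Order.IsOfFiniteCharacter {X : Set (Formula α Ag) | Consistent X} := by
  refine fun X => ⟨fun hX s hsX _ hs => hX (hs.mono hsX), fun hfin hX => ?_⟩
  obtain ⟨s, hsX, hs, hsbot⟩ := hX.exists_finite_subset
  exact hfin s hsX hs hsbot

theorem exists_mcs {X : Set (Formula α Ag)} (hX : Consistent X) : ∃ M, X ⊆ M ∧ MCS M := by
  obtain ⟨M, hXM, hM, hmax⟩ := isOfFiniteCharacter.exists_maximal (x := X) hX
  refine ⟨M, hXM, hM, fun χ => ?_⟩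
  by_contra! hχ
  have hinsert {ψ : Formula α Ag} (hψ : ψ ∉ M) : ¬ Consistent (insert ψ M) := fun hcons =>
    hψ (hmax hcons (Set.subset_insert ψ M) (Set.mem_insert ψ M))
  exact hM (.mp (ProvFrom.deduction (not_not.1 (hinsert hχ.1)))
    (ProvFrom.of_not_consistent_insert_neg (hinsert hχ.2)))

end Consistent

namespace MCS

variable {M : Set (Formula α Ag)}

theorem mem_of_provFrom (hM : MCS M) {χ : Formula α Ag} (h : ProvFrom M χ) : χ ∈ M :=
  (hM.2 χ).resolve_right fun hneg => hM.1 (h.absurd (.hyp hneg))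

theorem mem_of_prov_imp (hM : MCS M) {a b : Formula α Ag} (h : Prov (.imp a b)) (ha : a ∈ M) :
    b ∈ M :=
  hM.mem_of_provFrom (.mp (.thm h) (.hyp ha))

theorem neg_mem_iff (hM : MCS M) {χ : Formula α Ag} : Formula.neg χ ∈ M ↔ χ ∉ M :=
  ⟨fun hneg hχ => hM.1 ((ProvFrom.hyp hχ).absurd (.hyp hneg)), (hM.2 χ).resolve_left⟩

theorem imp_mem_iff (hM : MCS M) {a b : Formula α Ag} :
    Formula.imp a b ∈ M ↔ (a ∈ M → b ∈ M) := by
  refine ⟨fun hab ha => hM.mem_of_provFrom (.mp (.hyp hab) (.hyp ha)), fun h => ?_⟩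
  by_cases ha : a ∈ M
  · exact hM.mem_of_prov_imp (.taut fun v => by simp [eval]; grind) (h ha)
  · exact hM.mem_of_prov_imp (.taut fun v => by simp [eval]; grind) (hM.neg_mem_iff.2 ha)

theorem or_mem_iff (hM : MCS M) {a b : Formula α Ag} :
    Formula.or a b ∈ M ↔ a ∈ M ∨ b ∈ M := by
  rw [Formula.or, hM.imp_mem_iff, hM.neg_mem_iff]
  tauto

theorem know_mem_of_provFrom (hM : MCS M) {C : Set Ag} {γ : Formula α Ag}
    (h : ProvFrom {ψ | know C ψ ∈ M} γ) : know C γ ∈ M := by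
  induction h with
  | hyp hγ => exact hγ
  | thm hγ => exact hM.mem_of_provFrom (.thm (.necK C hγ))
  | mp _ _ ih₁ ih₂ => exact (hM.imp_mem_iff.1 (hM.mem_of_prov_imp (.distrib C _ _) ih₁)) ih₂

theorem exists_mcs_of_know_not_mem (hM : MCS M) {C : Set Ag} {χ : Formula α Ag}
    (h : know C χ ∉ M) :
    ∃ N, MCS N ∧ {ψ | know C ψ ∈ M} ⊆ N ∧ χ ∉ N := by
  have hcons : Consistent (insert (.neg χ) {ψ | know C ψ ∈ M}) := fun hbot =>
    h (hM.know_mem_of_provFrom (.of_not_consistent_insert_neg (not_not.2 hbot)))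
  obtain ⟨N, hN, hNmcs⟩ := hcons.exists_mcs
  exact ⟨N, hNmcs, (Set.subset_insert _ _).trans hN,
    hNmcs.neg_mem_iff.1 (hN (Set.mem_insert _ _))⟩

end MCS

namespace Prov

theorem imp_trans {a b c : Formula α Ag} (hab : Prov (.imp a b)) (hbc : Prov (.imp b c)) :
    Prov (.imp a c) :=
  .mp (.mp (.taut fun v => by simp [eval]; grind) hab) hbc

theorem know_imp_know (C : Set Ag) {a b : Formula α Ag} (h : Prov (.imp a b)) :
    Prov (.imp (.know C a) (.know C b)) :=
  .mp (.distrib C a b) (.necK C h)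

theorem know_or_of_subset {E F : Set Ag} (hEF : E ⊆ F) (a b : Formula α Ag) :
    Prov (.imp (.know F (.or (.know E a) b)) (.or (.know E a) (.know F b))) := by
  have hintro := Prov.negIntro E a
  have hmono := Prov.mono (.neg (.know E a)) hEF
  have hdistrib := Prov.distrib F (.neg (.know E a)) b
  refine .mp (.mp (.mp (.taut fun v => ?_) hintro) hmono) hdistrib
  simp [eval, Formula.or]
  grind

theorem cia_of_subset {C F : Set Ag} (hCF : C ⊆ F) (δ ψ : Formula α Ag) :
    Prov (.imp (.know F (.know Cᶜ (.imp (.know C δ) (.know F ψ))))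
      (.imp (.how C δ) (.how F ψ))) := by
  have hcia := Prov.cia (C := C) (I := F \ C) (A := Fᶜ) δ ψ (by ext; simp; tauto)
  rwa [Set.union_sdiff_cancel hCF, show Fᶜ ∪ F \ C = Cᶜ by ext; simp; tauto] at hcia

theorem how_of_know_know_compl_know {E F : Set Ag} (hFE : (F ∩ E).Nonempty)
    (φ : Formula α Ag) : Prov (.imp (.know F (.know Eᶜ (.know F φ))) (.how F φ)) := by
  have hweaken : Prov (.imp (.know Eᶜ (.know F φ))
      (.know (F ∩ E)ᶜ (.imp (.know (F ∩ E) .top) (.know F φ)))) :=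
    imp_trans (.mono _ (Set.compl_subset_compl.2 Set.inter_subset_right))
      (know_imp_know _ (.taut fun v => by simp [eval]; grind))
  have hcia := cia_of_subset (Set.inter_subset_left (s := F) (t := E)) .top φ
  have htop : Prov (.how (F ∩ E) (.top : Formula α Ag)) :=
    .necH hFE.ne_empty (.taut fun v => by simp [eval, Formula.top])
  exact .mp (.mp (.mp (.taut fun v => by simp [eval]; grind) (know_imp_know F hweaken)) hcia) htop

end Prov

theorem consistent_or_consistent_of_how_not_mem {M : Set (Formula α Ag)} (hM : MCS M)
    {F E : Set Ag} {φ : Formula α Ag} (h : how F φ ∉ M) (hE : E ⊆ F) (hEne : E.Nonempty)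
    (δ : Formula α Ag) :
    Consistent ({neg (.know Eᶜ (.imp (.know E δ) (.know F φ)))} ∪ {ψ | know F ψ ∈ M}) ∨
      Consistent ({neg (.how E δ), neg (.know Eᶜ (.know F φ))} ∪ {ψ | know F ψ ∈ M}) := by
  by_contra! ⟨hX, hY⟩
  rw [Set.singleton_union] at hX
  rw [Set.insert_union, Set.singleton_union, Set.insert_comm] at hY
  have hKcia : know F (.know Eᶜ (.imp (.know E δ) (.know F φ))) ∈ M :=
    hM.know_mem_of_provFrom (.of_not_consistent_insert_neg hX)
  have hKor : know F (.or (.know E (.how E δ)) (.know Eᶜ (.know F φ))) ∈ M := by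
    refine hM.know_mem_of_provFrom (.mp (.mp (.thm (.taut fun v => ?_))
      (.thm (.stratIntro E δ))) (.deduction (.of_not_consistent_insert_neg hY)))
    simp [eval, Formula.or]
    grind
  rcases hM.or_mem_iff.1 (hM.mem_of_prov_imp (Prov.know_or_of_subset hE _ _) hKor)
    with hKhow | hKKF
  · have hhow : how E δ ∈ M := hM.mem_of_prov_imp (.truth E _) hKhow
    exact h (hM.imp_mem_iff.1 (hM.mem_of_prov_imp (Prov.cia_of_subset hE δ φ) hKcia) hhow)
  · have hFE : (F ∩ E).Nonempty := hEne.mono (Set.subset_inter hE subset_rfl)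
    exact h (hM.mem_of_prov_imp (Prov.how_of_know_know_compl_know hFE φ) hKKF)

theorem exists_mcs_pair_of_consistent_or_consistent {S : Set (Formula α Ag)} {F E : Set Ag}
    {φ δ : Formula α Ag}
    (hXY : Consistent ({neg (.know Eᶜ (.imp (.know E δ) (.know F φ)))} ∪ S) ∨
      Consistent ({neg (.how E δ), neg (.know Eᶜ (.know F φ))} ∪ S)) :
    ∃ W U, MCS W ∧ S ⊆ W ∧ MCS U ∧ {ψ | know Eᶜ ψ ∈ W} ⊆ U ∧
      (how E δ ∈ W → know E δ ∈ U) ∧ know F φ ∉ U := by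
  rcases hXY with hX | hY
  · rw [Set.singleton_union] at hX
    obtain ⟨W, hXW, hW⟩ := hX.exists_mcs
    obtain ⟨U, hU, hWU, himp⟩ :=
      hW.exists_mcs_of_know_not_mem (hW.neg_mem_iff.1 (hXW (Set.mem_insert _ _)))
    rw [hU.imp_mem_iff, Classical.not_imp] at himp
    exact ⟨W, U, hW, (Set.subset_insert _ _).trans hXW, hU, hWU, fun _ => himp.1, himp.2⟩
  · rw [Set.insert_union, Set.singleton_union] at hY
    obtain ⟨W, hYW, hW⟩ := hY.exists_mcs
    have hhow : how E δ ∉ W := hW.neg_mem_iff.1 (hYW (Set.mem_insert _ _))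
    obtain ⟨U, hU, hWU, hKF⟩ := hW.exists_mcs_of_know_not_mem
      (hW.neg_mem_iff.1 (hYW (Set.mem_insert_of_mem _ (Set.mem_insert _ _))))
    exact ⟨W, U, hW, ((Set.subset_insert _ _).trans (Set.subset_insert _ _)).trans hYW, hU, hWU,
      fun h => (hhow h).elim, hKF⟩

theorem IsCanState.mcs_hd {X₀ : Set (Formula α Ag)} (hX₀ : MCS X₀)
    {w : List (Set Ag × Set (Formula α Ag))} (hw : IsCanState X₀ w) : MCS (hd X₀ w) := by
  cases w with
  | nil => exact hX₀
  | cons _ _ => exact hw.2.1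

theorem csimC_cons {C D : Set Ag} (hCD : C ⊆ D) (X : Set (Formula α Ag))
    (w : List (Set Ag × Set (Formula α Ag))) : CSimC C w ((D, X) :: w) :=
  fun _ ha => ⟨w, List.suffix_refl w, List.suffix_cons _ w, by simp, by simpa using hCD ha⟩

/-- Canonical H-existence lemma: if `H_F φ ∉ hd w` then, for any nonempty
`E ⊆ F` and any operation `δ`, at least one of the sets
`X = {¬K_{𝒜∖E}(K_E δ → K_F φ)} ∪ {ψ : K_F ψ ∈ hd w}` and
`Y = {¬H_E δ, ¬K_{𝒜∖E} K_F φ} ∪ {ψ : K_F ψ ∈ hd w}` is consistent, and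
there are canonical states `w'`, `u`, `u'` with `w ∼_F w'`,
`(w',E,δ,u) ∈ M`, `u ∼_F u'`, and `φ ∉ hd u'`. -/
theorem how_exists {α Ag : Type} {X₀ : Set (Formula α Ag)} (hX₀ : MCS X₀)
    {w : List (Set Ag × Set (Formula α Ag))} (hw : IsCanState X₀ w)
    {F E : Set Ag} {φ : Formula α Ag}
    (h : Formula.how F φ ∉ hd X₀ w) (hE : E ⊆ F) (hEne : E.Nonempty)
    (δ : Formula α Ag) :
    (Consistent ({Formula.neg (.know Eᶜ (.imp (.know E δ) (.know F φ)))} ∪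
        {ψ | Formula.know F ψ ∈ hd X₀ w}) ∨
     Consistent ({Formula.neg (.how E δ),
        Formula.neg (.know Eᶜ (.know F φ))} ∪
        {ψ | Formula.know F ψ ∈ hd X₀ w})) ∧
    ∃ w' u u', IsCanState X₀ w' ∧ IsCanState X₀ u ∧ IsCanState X₀ u' ∧
      CSimC F w w' ∧ CanM X₀ w' E δ u ∧ CSimC F u u' ∧
      φ ∉ hd X₀ u' := by
  have hXY := consistent_or_consistent_of_how_not_mem (hw.mcs_hd hX₀) h hE hEne δ
  obtain ⟨W, U, hW, hwW, hU, hWU, hmech, hKF⟩ := exists_mcs_pair_of_consistent_or_consistent hXY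
  obtain ⟨U', hU', hUU', hφ⟩ := hU.exists_mcs_of_know_not_mem hKF
  have hw' : IsCanState X₀ ((F, W) :: w) := ⟨hw, hW, hwW⟩
  have hu : IsCanState X₀ ((Eᶜ, U) :: (F, W) :: w) := ⟨hw', hU, hWU⟩
  exact ⟨hXY, _, _, (F, U') :: _, hw', hu, ⟨hu, hU', hUU'⟩, csimC_cons subset_rfl W w,
    ⟨csimC_cons subset_rfl U _, hmech⟩, csimC_cons subset_rfl U' _, hφ⟩
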